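/- Textual Frequency Law (sufficient condition): let x = (x_1, …, x_K) and x' = (x'_1, …, x'_{K'}) be two sentences (K, K' ≥ 1) with sfreq(x) > sfreq(x'), each satisfying its per-token marginal error bounds |ln P(x_k) - ln Q(x_k)| ≤ ε_k (respectively ε'_k) and average contextual discrepancy bounds η_x (respectively η_{x'}). If ln(sfreq(x) / sfreq(x')) > (ε̄_x + η_x) + (ε̄_{x'} + η_{x'}), where ε̄_x and ε̄_{x'} are the averages of the respective per-token bounds, then the average conditional losses are strictly ordered: ℓ(x) < ℓ(x'). -/

import Mathlib

lemma sentence_bound (K : ℕ) (P Q Qc ε : Fin K → ℝ) (η : ℝ)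
    (hmarg : ∀ k, |Real.log (P k) - Real.log (Q k)| ≤ ε k)
    (hctx : |(1 / (K : ℝ)) * ∑ k, (Real.log (Q k) - Real.log (Qc k))| ≤ η) :
    |(1 / (K : ℝ)) * ∑ k, Real.log (P k) - (1 / (K : ℝ)) * ∑ k, Real.log (Qc k)|
      ≤ (1 / (K : ℝ)) * ∑ k, ε k + η := by
  have h1 : |∑ k, (Real.log (P k) - Real.log (Q k))| ≤ ∑ k, ε k :=
    (Finset.abs_sum_le_sum_abs _ _).trans (Finset.sum_le_sum fun k _ => hmarg k)
  have hKnn : (0 : ℝ) ≤ 1 / (K : ℝ) := by positivity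
  have h2 : |(1 / (K : ℝ)) * ∑ k, (Real.log (P k) - Real.log (Q k))|
      ≤ (1 / (K : ℝ)) * ∑ k, ε k := by
    rw [abs_mul, abs_of_nonneg hKnn]
    exact mul_le_mul_of_nonneg_left h1 hKnn
  calc |(1 / (K : ℝ)) * ∑ k, Real.log (P k) - (1 / (K : ℝ)) * ∑ k, Real.log (Qc k)|
      = |(1 / (K : ℝ)) * ∑ k, (Real.log (P k) - Real.log (Q k))
          + (1 / (K : ℝ)) * ∑ k, (Real.log (Q k) - Real.log (Qc k))| := by
        simp only [← mul_add, ← Finset.sum_add_distrib, sub_add_sub_cancel,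
          Finset.sum_sub_distrib, mul_sub]
    _ ≤ _ := (abs_add_le _ _).trans (add_le_add h2 hctx)

/-- **Textual Frequency Law (sufficient condition).**
Let `x` and `x'` be two sentences of `K, K' ≥ 1` tokens with
`sfreq(x) > sfreq(x')`, each satisfying its per-token marginal error bounds
`|ln P k - ln Q k| ≤ ε k` (resp. `ε' k`) and average contextual discrepancy
bounds `η` (resp. `η'`). If
`ln(sfreq(x) / sfreq(x')) > (ε̄ + η) + (ε̄' + η')`, then the average
conditional losses are strictly ordered: `ℓ(x) < ℓ(x')`. -/
theorem textual_frequency_law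
    (K K' : ℕ) (hK : 1 ≤ K) (hK' : 1 ≤ K')
    (P Q Qc : Fin K → ℝ) (P' Q' Qc' : Fin K' → ℝ)
    (ε : Fin K → ℝ) (ε' : Fin K' → ℝ) (η η' : ℝ)
    (hP : ∀ k, 0 < P k) (hQ : ∀ k, 0 < Q k) (hQc : ∀ k, 0 < Qc k)
    (hP' : ∀ k, 0 < P' k) (hQ' : ∀ k, 0 < Q' k) (hQc' : ∀ k, 0 < Qc' k)
    (hε : ∀ k, 0 ≤ ε k) (hε' : ∀ k, 0 ≤ ε' k) (hη : 0 ≤ η) (hη' : 0 ≤ η')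
    (hmarg : ∀ k, |Real.log (P k) - Real.log (Q k)| ≤ ε k)
    (hmarg' : ∀ k, |Real.log (P' k) - Real.log (Q' k)| ≤ ε' k)
    (hctx : |(1 / (K : ℝ)) * ∑ k, (Real.log (Q k) - Real.log (Qc k))| ≤ η)
    (hctx' : |(1 / (K' : ℝ)) * ∑ k, (Real.log (Q' k) - Real.log (Qc' k))| ≤ η')
    (hfreq : (∏ k, P k) ^ (1 / (K : ℝ)) > (∏ k, P' k) ^ (1 / (K' : ℝ)))
    (hgap : Real.log (((∏ k, P k) ^ (1 / (K : ℝ))) / ((∏ k, P' k) ^ (1 / (K' : ℝ)))) >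
      ((1 / (K : ℝ)) * ∑ k, ε k + η) + ((1 / (K' : ℝ)) * ∑ k, ε' k + η')) :
    (1 / (K : ℝ)) * ∑ k, (-Real.log (Qc k)) <
      (1 / (K' : ℝ)) * ∑ k, (-Real.log (Qc' k)) := by
  have hprod : 0 < ∏ k, P k := Finset.prod_pos fun k _ => hP k
  have hprod' : 0 < ∏ k, P' k := Finset.prod_pos fun k _ => hP' k
  have hpow : (0 : ℝ) < (∏ k, P k) ^ (1 / (K : ℝ)) := Real.rpow_pos_of_pos hprod _
  have hpow' : (0 : ℝ) < (∏ k, P' k) ^ (1 / (K' : ℝ)) := Real.rpow_pos_of_pos hprod' _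
  have hlogA : Real.log ((∏ k, P k) ^ (1 / (K : ℝ)))
      = (1 / (K : ℝ)) * ∑ k, Real.log (P k) := by
    rw [Real.log_rpow hprod, Real.log_prod fun k _ => (hP k).ne']
  have hlogA' : Real.log ((∏ k, P' k) ^ (1 / (K' : ℝ)))
      = (1 / (K' : ℝ)) * ∑ k, Real.log (P' k) := by
    rw [Real.log_rpow hprod', Real.log_prod fun k _ => (hP' k).ne']
  rw [Real.log_div hpow.ne' hpow'.ne', hlogA, hlogA'] at hgap
  have hb := sentence_bound K P Q Qc ε η hmarg hctx
  have hb' := sentence_bound K' P' Q' Qc' ε' η' hmarg' hctx'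
  rw [abs_le] at hb hb'
  simp only [Finset.sum_neg_distrib, mul_neg]
  linarith [hb.1, hb.2, hb'.1, hb'.2]
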